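/- Let h ≥ 1 and let T_h be the simple graph obtained from the complete balanced binary tree of height h rooted at s by identifying all leaves with a single additional vertex t; concretely, the vertices of T_h are the binary strings of length < h together with t, the root s is the empty string, a string w of length < h−1 is adjacent to w0 and w1, and every string of length h−1 is adjacent to t. Let p, k ∈ ℕ with p ≥ h + 3 and k ≤ h, and suppose P_1, …, P_p is a family of p s-t paths in T_h with at most k shared edges. Then k = h and the set of shared edges is exactly the edge set of an s-t path in T_h of length h (a complete root-to-leaf path together with the final edge into t). -/

import Mathlib

/-- The set of shared edges of a family of `s`-`t` walks (an edge is shared if it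
occurs in two walks with distinct indices). -/
def sharedEdges {V : Type*} {G : SimpleGraph V} {s t : V} {p : ℕ}
    (P : Fin p → G.Walk s t) : Set (Sym2 V) :=
  {e | ∃ i j, i ≠ j ∧ e ∈ (P i).edges ∧ e ∈ (P j).edges}

/-- The complete balanced binary tree of height `h` rooted at the empty string,
with all leaves identified with one extra vertex `t = Sum.inr ()`:
a string `w` of length `< h - 1` is adjacent to `w0` and `w1`, and every string
of length `h - 1` is adjacent to `t`. (Strings of length `≥ h` are isolated.) -/
def treeGraph (h : ℕ) : SimpleGraph ((List Bool) ⊕ Unit) :=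
  SimpleGraph.fromRel fun u v =>
    (∃ w : List Bool, ∃ b : Bool,
      w.length + 1 < h ∧ u = Sum.inl w ∧ v = Sum.inl (w ++ [b])) ∨
    (∃ w : List Bool, w.length + 1 = h ∧ u = Sum.inl w ∧ v = Sum.inr ())

/-! An `s`-`t` path in `treeGraph h` descends from the root to a leaf `ℓ` and then takes the
edge into `t`. If two of the paths end at the same leaf, all `h` edges of that path are shared,
which forces equality. Otherwise the leaves are `p` distinct strings; every nonempty prefix
common to two of them yields a shared edge, and counting children in the binary tree shows
that `p` distinct leaves have at least `p - 2 > h` such branching prefixes. -/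

open Finset

section PrefixCounting

variable {α : Type*}

lemma isAntichain_prefix_of_length_eq {S : Set (List α)} {n : ℕ}
    (hS : ∀ x ∈ S, x.length = n) : IsAntichain (· <+: ·) S :=
  fun x hx y hy hne hxy => hne (hxy.eq_of_length ((hS x hx).trans (hS y hy).symm))

variable [DecidableEq α]

def prefixCount (L : Finset (List α)) (w : List α) : ℕ := #{x ∈ L | w <+: x}

def prefixesOf (L : Finset (List α)) : Finset (List α) := L.biUnion fun x => x.inits.toFinset

def branchPrefixes (L : Finset (List α)) : Finset (List α) :=
  {w ∈ prefixesOf L | w ≠ [] ∧ 2 ≤ prefixCount L w}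

variable {L : Finset (List α)}

lemma mem_prefixesOf {w : List α} : w ∈ prefixesOf L ↔ ∃ x ∈ L, w <+: x := by
  simp [prefixesOf, List.mem_inits]

lemma mem_prefixesOf_of_prefixCount_pos {w : List α} (h : 0 < prefixCount L w) :
    w ∈ prefixesOf L := by
  obtain ⟨x, hx⟩ := card_pos.mp h
  rw [mem_filter] at hx
  exact mem_prefixesOf.2 ⟨x, hx⟩

lemma mem_branchPrefixes {w : List α} :
    w ∈ branchPrefixes L ↔ w ≠ [] ∧ 2 ≤ prefixCount L w := by
  simp only [branchPrefixes, mem_filter, and_iff_right_iff_imp]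
  exact fun h => mem_prefixesOf_of_prefixCount_pos (by omega)

lemma prefixCount_le_of_prefix {u w : List α} (h : u <+: w) : prefixCount L w ≤ prefixCount L u :=
  card_le_card (monotone_filter_right _ fun _ _ hx => h.trans hx)

lemma prefixCount_nil : prefixCount L [] = #L := by
  simp [prefixCount]

lemma prefixCount_eq_one (hL : IsAntichain (· <+: ·) (L : Set (List α))) {x : List α}
    (hx : x ∈ L) : prefixCount L x = 1 := by
  rw [prefixCount, card_eq_one]
  refine ⟨x, ext fun y => ?_⟩
  simp only [mem_filter, mem_singleton]
  constructor
  · rintro ⟨hy, hxy⟩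
    by_contra hne
    exact hL hx hy (Ne.symm hne) hxy
  · rintro rfl
    exact ⟨hx, List.prefix_refl _⟩

lemma exists_prefix_prefixCount_eq_one (hL : IsAntichain (· <+: ·) (L : Set (List α)))
    (hcard : 2 ≤ #L) {x : List α} (hx : x ∈ L) :
    ∃ w, w <+: x ∧ w ≠ [] ∧ prefixCount L w = 1 ∧ 2 ≤ prefixCount L w.dropLast := by
  have hex : ∃ n, prefixCount L (x.take n) ≤ 1 :=
    ⟨x.length, by rw [List.take_length, prefixCount_eq_one hL hx]⟩
  set n := Nat.find hex
  have hspec : prefixCount L (x.take n) ≤ 1 := Nat.find_spec hex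
  have hn : n ≠ 0 := by
    intro h0
    rw [h0, List.take_zero, prefixCount_nil] at hspec
    omega
  have hnle : n ≤ x.length :=
    Nat.find_min' hex (by rw [List.take_length, prefixCount_eq_one hL hx])
  refine ⟨x.take n, List.take_prefix n x, fun h => ?_, ?_, ?_⟩
  · rw [h, prefixCount_nil] at hspec
    omega
  · exact le_antisymm hspec (card_pos.2 ⟨x, mem_filter.2 ⟨hx, List.take_prefix n x⟩⟩)
  · have hdrop : (x.take n).dropLast = x.take (n - 1) := by
      rw [List.dropLast_eq_take, List.take_take, List.length_take_of_le hnle]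
      congr 1
      omega
    rw [hdrop]
    exact not_le.1 (Nat.find_min hex (by omega : n - 1 < n))

theorem card_add_card_branchPrefixes_le [Fintype α]
    (hL : IsAntichain (· <+: ·) (L : Set (List α))) (hcard : 2 ≤ #L) :
    #L + #(branchPrefixes L) ≤ Fintype.card α * (#(branchPrefixes L) + 1) := by
  set B := branchPrefixes L
  -- Every element of `C` is a child of `[]` or of a branching prefix, `C` contains `B`, and
  -- outside `B` it contains, for each `x ∈ L`, a prefix of `x` that no other element extends.
  set C : Finset (List α) := {w ∈ prefixesOf L | w ≠ [] ∧ 2 ≤ prefixCount L w.dropLast}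
  have hBC : B ⊆ C := fun w hw => by
    obtain ⟨hne, h2⟩ := mem_branchPrefixes.1 hw
    exact mem_filter.2 ⟨(mem_filter.1 hw).1, hne, h2.trans (prefixCount_le_of_prefix w.dropLast_prefix)⟩
  have hleaves : #L ≤ #(C \ B) := by
    refine card_le_card_of_forall_subsingleton (fun x w => w <+: x) (fun x hx => ?_) ?_
    · obtain ⟨w, hwx, hne, h1, h2⟩ := exists_prefix_prefixCount_eq_one hL hcard hx
      refine ⟨w, mem_sdiff.2 ⟨mem_filter.2 ⟨mem_prefixesOf.2 ⟨x, hx, hwx⟩, hne, h2⟩, ?_⟩, hwx⟩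
      rw [mem_branchPrefixes]
      rintro ⟨-, h2'⟩
      omega
    · intro w hw x hx y hy
      obtain ⟨hwC, hwB⟩ := mem_sdiff.1 hw
      have h1 : prefixCount L w ≤ 1 := by
        by_contra! h2
        exact hwB (mem_branchPrefixes.2 ⟨(mem_filter.1 hwC).2.1, h2⟩)
      exact card_le_one.1 h1 x (mem_filter.2 hx) y (mem_filter.2 hy)
  have hparents : #C ≤ Fintype.card α * #(insert [] B) := by
    refine card_le_mul_card_image_of_maps_to (f := List.dropLast) (fun w hw => ?_) _
      (fun u _ => ?_)
    · obtain ⟨-, -, h2⟩ := mem_filter.1 hw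
      rcases eq_or_ne w.dropLast [] with h | h
      · exact h ▸ mem_insert_self _ _
      · exact mem_insert_of_mem (mem_branchPrefixes.2 ⟨h, h2⟩)
    · calc #{w ∈ C | w.dropLast = u} ≤ #(univ.image fun a => u ++ [a]) := by
            refine card_le_card fun w hw => ?_
            obtain ⟨hwC, rfl⟩ := mem_filter.1 hw
            have hne := (mem_filter.1 hwC).2.1
            exact mem_image.2 ⟨w.getLast hne, mem_univ _, List.dropLast_concat_getLast hne⟩
        _ ≤ Fintype.card α := card_image_le
  calc #L + #B ≤ #(C \ B) + #B := by omega
    _ = #C := card_sdiff_add_card_eq_card hBC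
    _ ≤ Fintype.card α * #(insert [] B) := hparents
    _ ≤ Fintype.card α * (#B + 1) := by gcongr; exact card_insert_le _ _

end PrefixCounting

section SharedEdges

variable {V : Type*} {G : SimpleGraph V} {s t : V} {p : ℕ}

lemma sharedEdges_finite (P : Fin p → G.Walk s t) : (sharedEdges P).Finite :=
  (Set.finite_iUnion fun i => (P i).edges.finite_toSet).subset
    fun _ ⟨i, _, _, hi, _⟩ => Set.mem_iUnion.2 ⟨i, hi⟩

lemma SimpleGraph.Walk.IsTrail.ncard_setOf_mem_edges {u v : V} {W : G.Walk u v}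
    (hW : W.IsTrail) : {e | e ∈ W.edges}.ncard = W.length := by
  classical
  rw [← W.length_edges, ← List.toFinset_card_of_nodup hW.edges_nodup, ← Set.ncard_coe_finset]
  congr 1
  ext
  simp

lemma sharedEdges_eq_of_edges_eq (P : Fin p → G.Walk s t) {i j : Fin p} (hij : i ≠ j)
    (hi : (P i).IsTrail) (hedges : (P i).edges = (P j).edges)
    (hcard : (sharedEdges P).ncard ≤ (P i).length) :
    sharedEdges P = {e | e ∈ (P i).edges} := by
  have hsub : {e | e ∈ (P i).edges} ⊆ sharedEdges P := fun _ he => ⟨i, j, hij, he, hedges ▸ he⟩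
  exact (Set.eq_of_subset_of_ncard_le hsub (hi.ncard_setOf_mem_edges ▸ hcard)
    (sharedEdges_finite P)).symm

end SharedEdges

section TreeGraph

open SimpleGraph

def parentEdge (w : List Bool) : Sym2 (List Bool ⊕ Unit) := s(Sum.inl w.dropLast, Sum.inl w)

lemma parentEdge_injOn : Set.InjOn parentEdge {w | w ≠ []} := by
  intro w hw w' _ heq
  rcases Sym2.eq_iff.1 heq with ⟨-, h⟩ | ⟨h₁, h₂⟩
  · exact Sum.inl.inj h
  · have l₁ := congrArg List.length (Sum.inl.inj h₁)
    have l₂ := congrArg List.length (Sum.inl.inj h₂)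
    have := List.length_pos_iff.2 hw
    simp only [List.length_dropLast] at l₁ l₂
    omega

def descentEdges : List Bool → List Bool → List (Sym2 (List Bool ⊕ Unit))
  | v, [] => [s(Sum.inl v, Sum.inr ())]
  | v, b :: r => parentEdge (v ++ [b]) :: descentEdges (v ++ [b]) r

lemma length_descentEdges : ∀ v rest : List Bool,
    (descentEdges v rest).length = rest.length + 1
  | _, [] => rfl
  | v, _ :: r => by simp [descentEdges, length_descentEdges _ r]

lemma parentEdge_mem_descentEdges : ∀ {v rest w : List Bool}, w ≠ [] → w <+: rest →
    parentEdge (v ++ w) ∈ descentEdges v rest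
  | _, [], _, hw, hpre => absurd (List.prefix_nil.1 hpre) hw
  | _, _ :: _, [], hw, _ => absurd rfl hw
  | v, c :: r, b :: w, _, hpre => by
    obtain ⟨rfl, hpre'⟩ := List.cons_prefix_cons.1 hpre
    rw [descentEdges, List.mem_cons]
    rcases eq_or_ne w [] with rfl | hw
    · exact Or.inl rfl
    · exact Or.inr (by simpa using parentEdge_mem_descentEdges (v := v ++ [b]) hw hpre')

lemma exists_edges_eq_descentEdges_of_isPath {h : ℕ} {a c : List Bool ⊕ Unit}
    (W : (treeGraph h).Walk a c) (hW : W.IsPath) (hc : c = Sum.inr ()) (v : List Bool)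
    (ha : a = Sum.inl v) (hup : v = [] ∨ Sum.inl v.dropLast ∉ W.support) :
    ∃ rest, v.length + rest.length + 1 = h ∧ W.edges = descentEdges v rest := by
  induction W generalizing v with
  | nil => cases hc.symm.trans ha
  | @cons u x c hadj W ih =>
    subst ha hc
    rw [Walk.cons_isPath_iff] at hW
    rw [treeGraph, fromRel_adj] at hadj
    obtain ⟨-, (⟨w, b, -, hw, rfl⟩ | ⟨w, hlen, hw, rfl⟩) | (⟨w, b, -, rfl, hw⟩ | ⟨w, -, -, hw⟩)⟩ :=
      hadj
    · cases hw
      obtain ⟨rest, hlen, hedges⟩ := ih hW.1 rfl (v ++ [b]) rfl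
        (Or.inr (by simpa using hW.2))
      refine ⟨b :: rest, ?_, ?_⟩
      · simp only [List.length_append, List.length_cons, List.length_nil] at hlen ⊢
        omega
      · rw [Walk.edges_cons, hedges, descentEdges, parentEdge, List.dropLast_concat]
    · cases hw
      refine ⟨[], by simpa using hlen, ?_⟩
      rw [Walk.edges_cons, Walk.edges_eq_nil.2 (Walk.isPath_iff_nil.1 hW.1), descentEdges]
    · cases hw
      simp at hup
    · cases hw

lemma exists_leaf_of_isPath {h : ℕ} (P : (treeGraph h).Walk (Sum.inl []) (Sum.inr ()))
    (hP : P.IsPath) : ∃ ℓ : List Bool, ℓ.length + 1 = h ∧ P.edges = descentEdges [] ℓ := by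
  simpa using exists_edges_eq_descentEdges_of_isPath P hP rfl [] rfl (Or.inl rfl)

lemma card_branchPrefixes_le_ncard_sharedEdges {h p : ℕ}
    {P : Fin p → (treeGraph h).Walk (Sum.inl []) (Sum.inr ())} {ℓ : Fin p → List Bool}
    (hℓ : ∀ i, (P i).edges = descentEdges [] (ℓ i)) :
    #(branchPrefixes (univ.image ℓ)) ≤ (sharedEdges P).ncard := by
  classical
  have hinj : Set.InjOn parentEdge (branchPrefixes (univ.image ℓ) : Set (List Bool)) :=
    parentEdge_injOn.mono fun w hw => (mem_branchPrefixes.1 hw).1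
  rw [← card_image_of_injOn hinj, ← Set.ncard_coe_finset]
  refine Set.ncard_le_ncard (fun e he => ?_) (sharedEdges_finite P)
  obtain ⟨w, hw, rfl⟩ := mem_image.1 he
  obtain ⟨hne, h2⟩ := mem_branchPrefixes.1 hw
  obtain ⟨x, hx, y, hy, hxy⟩ := one_lt_card.1 h2
  obtain ⟨hx, hwx⟩ := mem_filter.1 hx
  obtain ⟨hy, hwy⟩ := mem_filter.1 hy
  obtain ⟨i, -, rfl⟩ := mem_image.1 hx
  obtain ⟨j, -, rfl⟩ := mem_image.1 hy
  refine ⟨i, j, fun hij => hxy (hij ▸ rfl), ?_, ?_⟩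
  · simpa [hℓ i] using parentEdge_mem_descentEdges (v := []) hne hwx
  · simpa [hℓ j] using parentEdge_mem_descentEdges (v := []) hne hwy

end TreeGraph

theorem stmt10_general (h : ℕ) (p k : ℕ) (hp : h + 3 ≤ p) (hk : k ≤ h)
    (P : Fin p → (treeGraph h).Walk (Sum.inl ([] : List Bool)) (Sum.inr ()))
    (hP : ∀ i, (P i).IsPath) (hsh : (sharedEdges P).ncard ≤ k) :
    k = h ∧
    ∃ W : (treeGraph h).Walk (Sum.inl ([] : List Bool)) (Sum.inr ()),
      W.IsPath ∧ W.length = h ∧ sharedEdges P = {e | e ∈ W.edges} := by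
  choose ℓ hℓlen hℓ using fun i => exists_leaf_of_isPath (P i) (hP i)
  have hlength : ∀ i, (P i).length = h := fun i => by
    rw [← SimpleGraph.Walk.length_edges, hℓ i, length_descentEdges, hℓlen i]
  by_cases hinj : Function.Injective ℓ
  · have hanti : IsAntichain (· <+: ·) (univ.image ℓ : Set (List Bool)) := by
      refine isAntichain_prefix_of_length_eq (n := h - 1) fun x hx => ?_
      obtain ⟨i, -, rfl⟩ := mem_image.1 hx
      have := hℓlen i
      omega
    have hcard : #(univ.image ℓ) = p := by
      rw [card_image_of_injective _ hinj, card_univ, Fintype.card_fin]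
    have hcount := card_add_card_branchPrefixes_le hanti (by omega)
    have hshared := card_branchPrefixes_le_ncard_sharedEdges hℓ
    rw [hcard, Fintype.card_bool] at hcount
    omega
  · obtain ⟨i, j, hℓij, hij⟩ := Function.not_injective_iff.1 hinj
    have hedges : (P i).edges = (P j).edges := by rw [hℓ i, hℓ j, hℓij]
    have hshared := sharedEdges_eq_of_edges_eq P hij (hP i).isTrail hedges
      (by rw [hlength i]; omega)
    have hcard := (hP i).isTrail.ncard_setOf_mem_edges
    rw [← hshared, hlength i] at hcard
    exact ⟨by omega, P i, hP i, hlength i, hshared⟩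

/-- In the tree-with-identified-leaves `treeGraph h`, any family of `p ≥ h + 3`
`s`-`t` paths with at most `k ≤ h` shared edges forces `k = h`, and its shared
edge set is exactly the edge set of an `s`-`t` path of length `h`. -/
theorem stmt10 (h : ℕ) (hh : 1 ≤ h) (p k : ℕ) (hp : h + 3 ≤ p) (hk : k ≤ h)
    (P : Fin p → (treeGraph h).Walk (Sum.inl ([] : List Bool)) (Sum.inr ()))
    (hP : ∀ i, (P i).IsPath) (hsh : (sharedEdges P).ncard ≤ k) :
    k = h ∧
    ∃ W : (treeGraph h).Walk (Sum.inl ([] : List Bool)) (Sum.inr ()),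
      W.IsPath ∧ W.length = h ∧ sharedEdges P = {e | e ∈ W.edges} :=
  stmt10_general h p k hp hk P hP hsh
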